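/- Let G′ be a semi-Markovian causal graph with observed variables V′ and unobserved variables U′ such that there are no directed edges between observed variables and the bidirected edges of G′_{V′} form a spanning tree of V′; fix ε ∈ (0,1), fix V₁ ∈ V′, and let M₁ and M₂ be the SEMs in which every variable is binary, every unobserved variable is uniform on {0,1}, in M₁ every X ∈ V′ satisfies P^{M₁}(x | pa) = (1 − ε)·𝟙[x = ⊕pa] + ε/2, and in M₂ every X ∈ V′ ∖ {V₁} satisfies P^{M₂}(x | pa) = (1 − ε)·𝟙[x = ⊕pa] + ε/2 while P^{M₂}(v₁ | pa) = (1 − ε)·𝟙[v₁ = ¬(⊕pa)] + ε/2, where ⊕pa denotes the XOR of the parent values. Then, for the realization v = 0 assigning 0 to every observed variable, Q^{M₁}[V′](0) ≠ Q^{M₂}[V′](0). -/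

import Mathlib

open scoped Classical

/-- A semi-Markovian causal graph: a DAG over a finite vertex set partitioned into
observed (`obs`) and unobserved (`unobs`) variables, where every unobserved variable
has no parents and exactly two (distinct, observed) children. -/
structure CausalGraph (ν : Type) [Fintype ν] [DecidableEq ν] where
  obs : Finset ν
  unobs : Finset ν
  disj : Disjoint obs unobs
  E : ν → ν → Prop
  edge_mem : ∀ x y, E x y → x ∈ obs ∪ unobs ∧ y ∈ obs ∪ unobs
  acyclic : ∀ x, ¬ Relation.TransGen E x x
  unobs_no_parent : ∀ u ∈ unobs, ∀ w, ¬ E w u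
  unobs_two_children : ∀ u ∈ unobs,
    ∃ a b, a ≠ b ∧ a ∈ obs ∧ b ∈ obs ∧ (∀ w, E u w ↔ w = a ∨ w = b)

namespace CausalGraph

variable {ν : Type} [Fintype ν] [DecidableEq ν]

def verts (G : CausalGraph ν) : Finset ν := G.obs ∪ G.unobs

/-- A structural equation model over the causal graph `G`: finite nonempty domains
(encoded as finite sets of naturals), a pmf for each unobserved variable, and a
conditional pmf (given an assignment to the parents) for each observed variable. -/
structure SEM (G : CausalGraph ν) where
  dom : ν → Finset ℕ
  dom_ne : ∀ x, (dom x).Nonempty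
  pU : ν → ℕ → ℝ
  pU_nonneg : ∀ u n, 0 ≤ pU u n
  pU_sum : ∀ u ∈ G.unobs, ∑ n ∈ dom u, pU u n = 1
  pO : ν → ℕ → (ν → ℕ) → ℝ
  pO_nonneg : ∀ x n pa, 0 ≤ pO x n pa
  pO_sum : ∀ x ∈ G.obs, ∀ pa : ν → ℕ, ∑ n ∈ dom x, pO x n pa = 1
  pO_par : ∀ x n (pa pa' : ν → ℕ), (∀ p, G.E p x → pa p = pa' p) → pO x n pa = pO x n pa'

namespace SEM

variable {G : CausalGraph ν}

/-- Full assignments: all variables of `G` get values in their domains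
(non-vertices are pinned to `0`). -/
noncomputable def fullAssign (M : SEM G) : Finset (ν → ℕ) :=
  Fintype.piFinset (fun x => if x ∈ G.verts then M.dom x else {0})

/-- Observed assignments `dom(V)`: observed variables get values in their domains
(all other coordinates are pinned to `0`). -/
noncomputable def obsAssign (M : SEM G) : Finset (ν → ℕ) :=
  Fintype.piFinset (fun x => if x ∈ G.obs then M.dom x else {0})

/-- `Q^M[S](v) = Σ_u Π_{X ∈ S} P(x | pa_G(X)) Π_{U} P(u)`. -/
noncomputable def Q (M : SEM G) (S : Finset ν) (v : ν → ℕ) : ℝ :=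
  ∑ w ∈ M.fullAssign.filter (fun w => ∀ x ∈ G.obs, w x = v x),
    (∏ x ∈ S, M.pO x (w x) w) * ∏ u ∈ G.unobs, M.pU u (w u)

/-- The observational distribution `P^M(v) = Q^M[V](v)`. -/
noncomputable def P (M : SEM G) (v : ν → ℕ) : ℝ := M.Q G.obs v

/-- Post-interventional probability `P^M_x(y)`: sum of `Q^M[V∖X]` over all observed
realizations consistent with `x` on `X` and `y` on `Y`. -/
noncomputable def Px (M : SEM G) (X : Finset ν) (x : ν → ℕ) (Y : Finset ν) (y : ν → ℕ) : ℝ :=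
  ∑ v ∈ M.obsAssign.filter (fun v => (∀ i ∈ X, v i = x i) ∧ (∀ i ∈ Y, v i = y i)),
    M.Q (G.obs \ X) v

/-- `M ∈ 𝕄⁺(G)`: strictly positive observational distribution. -/
def positive (M : SEM G) : Prop := ∀ v ∈ M.obsAssign, 0 < M.P v

end SEM

/-- The causal effect of `X` on `Y` is identifiable from `G`. -/
def Identifiable (G : CausalGraph ν) (X Y : Finset ν) : Prop :=
  ∀ M₁ M₂ : SEM G, M₁.positive → M₂.positive →
    (∀ i ∈ G.obs, M₁.dom i = M₂.dom i) →
    (∀ v ∈ M₁.obsAssign, M₁.P v = M₂.P v) →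
    ∀ x y : ν → ℕ, (∀ i ∈ X, x i ∈ M₁.dom i) → (∀ i ∈ Y, y i ∈ M₁.dom i) →
      M₁.Px X x Y y = M₂.Px X x Y y

/-- `Q[S]` is identifiable from `G`. -/
def QIdentifiable (G : CausalGraph ν) (S : Finset ν) : Prop :=
  Identifiable G (G.obs \ S) S

/-- The causal effect of `X` on `Y` is g-identifiable from `(𝔸, G)`. -/
def GIdentifiable (G : CausalGraph ν) (𝔸 : Finset (Finset ν)) (X Y : Finset ν) : Prop :=
  ∀ M₁ M₂ : SEM G, M₁.positive → M₂.positive →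
    (∀ i ∈ G.obs, M₁.dom i = M₂.dom i) →
    (∀ A ∈ 𝔸, ∀ v ∈ M₁.obsAssign, M₁.Q A v = M₂.Q A v) →
    ∀ x y : ν → ℕ, (∀ i ∈ X, x i ∈ M₁.dom i) → (∀ i ∈ Y, y i ∈ M₁.dom i) →
      M₁.Px X x Y y = M₂.Px X x Y y

/-- `Q[S]` is g-identifiable from `(𝔸, G)`. -/
def QGIdentifiable (G : CausalGraph ν) (𝔸 : Finset (Finset ν)) (S : Finset ν) : Prop :=
  GIdentifiable G 𝔸 (G.obs \ S) S

/-- Bidirected edge of `G_X` between `a` and `b`: distinct members of `X` sharing an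
unobserved parent (whose two children then necessarily both lie in `X`). -/
def biEdge (G : CausalGraph ν) (X : Finset ν) (a b : ν) : Prop :=
  a ≠ b ∧ a ∈ X ∧ b ∈ X ∧ ∃ u ∈ G.unobs, G.E u a ∧ G.E u b

/-- `X` is a single c-component of `G`. -/
def SingleC (G : CausalGraph ν) (X : Finset ν) : Prop :=
  X.Nonempty ∧ ∀ a ∈ X, ∀ b ∈ X, Relation.ReflTransGen (G.biEdge X) a b

/-- The c-components of `S`: connected components of the bidirected part of `G_S`. -/
noncomputable def cComponents (G : CausalGraph ν) (S : Finset ν) : Finset (Finset ν) :=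
  S.image (fun a => S.filter (fun b => Relation.ReflTransGen (G.biEdge S) a b))

/-- Directed edge of `G_X` (both endpoints in `X`). -/
def dirEdgeIn (G : CausalGraph ν) (X : Finset ν) (a b : ν) : Prop :=
  a ∈ X ∧ b ∈ X ∧ G.E a b

/-- `Anc_Y(G_X)`: members of `X` having a directed path in `G_X` to some member of `Y`. -/
noncomputable def ancIn (G : CausalGraph ν) (X Y : Finset ν) : Finset ν :=
  X.filter (fun a => ∃ y ∈ Y, Relation.ReflTransGen (G.dirEdgeIn X) a y)

/-- Unobserved vertices of the induced subgraph `G[A]`: unobserved vertices of `G`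
both of whose children lie in `A`. -/
noncomputable def inducedUnobs (G : CausalGraph ν) (A : Finset ν) : Finset ν :=
  G.unobs.filter (fun u => ∀ w, G.E u w → w ∈ A)

/-- The induced subgraph `G[A]`. -/
noncomputable def induced (G : CausalGraph ν) (A : Finset ν) : CausalGraph ν where
  obs := A ∩ G.obs
  unobs := G.inducedUnobs A
  disj := G.disj.mono Finset.inter_subset_right (Finset.filter_subset _ _)
  E x y := G.E x y ∧ x ∈ (A ∩ G.obs) ∪ G.inducedUnobs A ∧ y ∈ (A ∩ G.obs) ∪ G.inducedUnobs A
  edge_mem := fun x y h => ⟨h.2.1, h.2.2⟩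
  acyclic := fun x h => G.acyclic x (by
    have key : ∀ a b, Relation.TransGen (fun x y => G.E x y ∧ x ∈ (A ∩ G.obs) ∪ G.inducedUnobs A ∧
        y ∈ (A ∩ G.obs) ∪ G.inducedUnobs A) a b → Relation.TransGen G.E a b := by
      intro a b hab
      induction hab with
      | single hab => exact .single hab.1
      | tail _ hbc ih => exact .tail ih hbc.1
    exact key x x h)
  unobs_no_parent := fun u hu w hw =>
    G.unobs_no_parent u (Finset.mem_filter.mp hu).1 w hw.1
  unobs_two_children := by
    intro u hu
    have hu' := Finset.mem_filter.mp hu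
    obtain ⟨a, b, hab, ha, hb, hiff⟩ := G.unobs_two_children u hu'.1
    have hEa : G.E u a := (hiff a).mpr (Or.inl rfl)
    have hEb : G.E u b := (hiff b).mpr (Or.inr rfl)
    have haA : a ∈ A := hu'.2 a hEa
    have hbA : b ∈ A := hu'.2 b hEb
    refine ⟨a, b, hab, Finset.mem_inter.mpr ⟨haA, ha⟩, Finset.mem_inter.mpr ⟨hbA, hb⟩, ?_⟩
    intro w
    constructor
    · intro hw; exact (hiff w).mp hw.1
    · rintro (rfl | rfl)
      · exact ⟨hEa, Finset.mem_union.mpr (Or.inr hu),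
          Finset.mem_union.mpr (Or.inl (Finset.mem_inter.mpr ⟨haA, ha⟩))⟩
      · exact ⟨hEb, Finset.mem_union.mpr (Or.inr hu),
          Finset.mem_union.mpr (Or.inl (Finset.mem_inter.mpr ⟨hbA, hb⟩))⟩

/-- `H` is a subgraph of `G`. -/
def IsSubgraph (H G : CausalGraph ν) : Prop :=
  H.obs ⊆ G.obs ∧ H.unobs ⊆ G.unobs ∧ ∀ a b, H.E a b → G.E a b

/-- `H` is an `R`-rooted c-forest: `R` is the root set of `H`, the observed vertex set of
`H` is a single c-component, and every observed vertex has at most one child in `H`. -/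
def IsCForest (H : CausalGraph ν) (R : Finset ν) : Prop :=
  H.obs.filter (fun x => ∀ w, ¬ H.E x w) = R ∧
  H.SingleC H.obs ∧
  ∀ x ∈ H.obs, ∀ w w', H.E x w → H.E x w' → w = w'

end CausalGraph

/-- The XOR (mod-2 sum) of the values of the parents of `x` under the assignment `pa`. -/
noncomputable def CausalGraph.xorPa {ν : Type} [Fintype ν] [DecidableEq ν]
    (G : CausalGraph ν) (x : ν) (pa : ν → ℕ) : ℕ :=
  (∑ p ∈ Finset.univ.filter (fun p => G.E p x), pa p) % 2

/-!
Write `c = 1 - ε` and `s_x = (-1) ^ (⊕pa(x))`. At the all-zero realization the factor of `x` is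
`(1 + c s_x) / 2`, except for `V₁` in `M₂` where it is `(1 - c s_x) / 2`, so `Q^{M₁} - Q^{M₂}` is,
up to a positive factor, `Σ_u s_{V₁} ∏_{x ≠ V₁} (c s_x / 2 + 1 / 2)`. Expanding the product yields
the character sums `Σ_u ∏_{x ∈ S} s_x` with `V₁ ∈ S`; such a sum vanishes as soon as some
unobserved variable has exactly one child in `S`, which by connectivity happens unless `S = V'`.
Only the top term survives, and the difference is `c ^ |V'| / 2 ^ (|V'| - 1) ≠ 0`.
-/

open Finset

theorem Relation.ReflTransGen.exists_rel_of_not {α : Type*} {r : α → α → Prop} {p : α → Prop}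
    {x y : α} (h : Relation.ReflTransGen r x y) (hx : p x) (hy : ¬ p y) :
    ∃ a b, p a ∧ ¬ p b ∧ r a b := by
  induction h with
  | refl => exact absurd hx hy
  | @tail b c _ hbc ih =>
    by_cases hb : p b
    · exact ⟨b, c, hb, hy, hbc⟩
    · exact ih hb

/-- Fourier expansion of `s a * ∏ (e * s x + d)`: only the top character survives. -/
theorem sum_mul_prod_erase_mul_add {ι α R : Type*} [CommRing R] [DecidableEq α]
    (B : Finset ι) {O : Finset α} {a : α} (ha : a ∈ O) (s : ι → α → R) (d e K : R)
    (hfull : ∑ w ∈ B, ∏ x ∈ O, s w x = K)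
    (hpart : ∀ S ⊂ O, a ∈ S → ∑ w ∈ B, ∏ x ∈ S, s w x = 0) :
    ∑ w ∈ B, s w a * ∏ x ∈ O.erase a, (e * s w x + d) = e ^ (#O - 1) * K := by
  have hexpand : ∀ w ∈ B, s w a * ∏ x ∈ O.erase a, (e * s w x + d) =
      ∑ T ∈ (O.erase a).powerset,
        e ^ #T * d ^ #((O.erase a) \ T) * ∏ x ∈ insert a T, s w x := by
    intro w _
    rw [prod_add, mul_sum]
    refine sum_congr rfl fun T hT => ?_
    rw [prod_insert fun haT => notMem_erase a O (mem_powerset.mp hT haT),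
      prod_mul_distrib, prod_const, prod_const]
    ring
  rw [sum_congr rfl hexpand, sum_comm]
  simp_rw [← mul_sum]
  rw [sum_eq_single_of_mem _ (mem_powerset_self _), sdiff_self, bot_eq_empty, card_empty,
    pow_zero, mul_one, insert_erase ha, hfull, card_erase_of_mem ha]
  intro T hT hne
  have hsub : insert a T ⊂ O := by
    refine Finset.ssubset_iff_subset_ne.mpr ⟨insert_subset ha ((mem_powerset.mp hT).trans
      (erase_subset a O)), fun heq => hne ?_⟩
    rw [← heq, erase_insert fun haT => notMem_erase a O (mem_powerset.mp hT haT)]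
  rw [hpart _ hsub (mem_insert_self a T), mul_zero]

theorem noisy_xor_zero_eq (ε : ℝ) {b : ℕ} (hb : b < 2) :
    (1 - ε) * (if 0 = b then 1 else 0) + ε / 2 = (1 - ε) / 2 * (-1) ^ b + 1 / 2 := by
  interval_cases b <;> norm_num <;> ring

theorem noisy_not_xor_zero_eq (ε : ℝ) {b : ℕ} (hb : b < 2) :
    (1 - ε) * (if 0 = 1 - b then 1 else 0) + ε / 2 = -((1 - ε) / 2 * (-1) ^ b) + 1 / 2 := by
  interval_cases b <;> norm_num <;> ring

namespace CausalGraph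

variable {ν : Type} [Fintype ν] [DecidableEq ν] (G : CausalGraph ν)

noncomputable def unobsBinary : Finset (ν → ℕ) :=
  Fintype.piFinset fun p => if p ∈ G.unobs then ({0, 1} : Finset ℕ) else {0}

noncomputable def xorSign (x : ν) (w : ν → ℕ) : ℝ := (-1) ^ G.xorPa x w

variable {G}

theorem unobsBinary_apply_mem {w : ν → ℕ} (hw : w ∈ G.unobsBinary) (p : ν) :
    w p ∈ ({0, 1} : Finset ℕ) := by
  have := Fintype.mem_piFinset.mp hw p
  split_ifs at this
  · exact this
  · simp_all

theorem unobsBinary_apply_of_notMem {w : ν → ℕ} (hw : w ∈ G.unobsBinary) {p : ν}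
    (hp : p ∉ G.unobs) : w p = 0 := by
  simpa [hp] using Fintype.mem_piFinset.mp hw p

theorem notMem_unobs_of_mem_obs {x : ν} (hx : x ∈ G.obs) : x ∉ G.unobs :=
  disjoint_left.mp G.disj hx

theorem prod_xorSign (S : Finset ν) (w : ν → ℕ) :
    ∏ x ∈ S, G.xorSign x w = ∏ p, ((-1 : ℝ) ^ w p) ^ #{x ∈ S | G.E p x} := by
  calc ∏ x ∈ S, G.xorSign x w
      = ∏ x ∈ S, ∏ p, if G.E p x then (-1 : ℝ) ^ w p else 1 := by
        refine prod_congr rfl fun x _ => ?_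
        rw [xorSign, xorPa, ← neg_one_pow_eq_pow_mod_two, ← prod_pow_eq_pow_sum, prod_filter]
    _ = ∏ p, ((-1 : ℝ) ^ w p) ^ #{x ∈ S | G.E p x} := by
        rw [prod_comm]
        exact prod_congr rfl fun p _ => by rw [← prod_filter, prod_const]

theorem sum_unobsBinary_prod_xorSign (S : Finset ν) :
    ∑ w ∈ G.unobsBinary, ∏ x ∈ S, G.xorSign x w =
      ∏ u ∈ G.unobs, (1 + (-1 : ℝ) ^ #{x ∈ S | G.E u x}) := by
  simp_rw [prod_xorSign, unobsBinary]
  rw [← prod_univ_sum _ fun p n => ((-1 : ℝ) ^ n) ^ #{x ∈ S | G.E p x},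
    ← prod_filter_mul_prod_filter_not univ (· ∈ G.unobs), filter_mem_eq_inter,
    univ_inter]
  have hrest : ∏ p ∈ univ.filter (· ∉ G.unobs),
      ∑ n ∈ (if p ∈ G.unobs then ({0, 1} : Finset ℕ) else {0}),
        ((-1 : ℝ) ^ n) ^ #{x ∈ S | G.E p x} = 1 :=
    prod_eq_one fun p hp => by simp [(mem_filter.mp hp).2]
  rw [hrest, mul_one]
  exact prod_congr rfl fun u hu => by simp [hu]

theorem card_children_obs {u : ν} (hu : u ∈ G.unobs) : #{x ∈ G.obs | G.E u x} = 2 := by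
  obtain ⟨a, b, hab, ha, hb, hiff⟩ := G.unobs_two_children u hu
  have : G.obs.filter (G.E u ·) = {a, b} := by
    ext x
    simp only [mem_filter, mem_insert, mem_singleton, hiff x]
    constructor
    · exact And.right
    · rintro (rfl | rfl) <;> simp_all
  rw [this, card_pair hab]

/-- A path from `a` to a vertex outside `S` leaves `S` along a bidirected edge, whose unobserved
parent has exactly one child in `S`. -/
theorem exists_unobs_card_children_eq_one (hconn : G.SingleC G.obs) {S : Finset ν}
    (hS : S ⊂ G.obs) {a : ν} (ha : a ∈ S) : ∃ u ∈ G.unobs, #{x ∈ S | G.E u x} = 1 := by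
  obtain ⟨y, hyO, hyS⟩ := exists_of_ssubset hS
  obtain ⟨b, c, hb, hc, -, -, -, u, hu, hub, huc⟩ :=
    (hconn.2 a (hS.subset ha) y hyO).exists_rel_of_not (p := (· ∈ S)) ha hyS
  obtain ⟨a', b', -, -, -, hiff⟩ := G.unobs_two_children u hu
  have hch : ∀ x, G.E u x ↔ x = b ∨ x = c := by
    intro x
    rw [hiff x]
    rcases (hiff b).mp hub with rfl | rfl <;> rcases (hiff c).mp huc with rfl | rfl <;> tauto
  refine ⟨u, hu, card_eq_one.mpr ⟨b, ?_⟩⟩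
  ext x
  simp only [mem_filter, mem_singleton, hch x]
  constructor
  · rintro ⟨hx, rfl | rfl⟩
    · rfl
    · exact absurd hx hc
  · rintro rfl
    exact ⟨hb, Or.inl rfl⟩

theorem sum_unobsBinary_prod_xorSign_obs :
    ∑ w ∈ G.unobsBinary, ∏ x ∈ G.obs, G.xorSign x w = 2 ^ #G.unobs := by
  rw [sum_unobsBinary_prod_xorSign, ← prod_const]
  exact prod_congr rfl fun u hu => by rw [card_children_obs hu]; norm_num

theorem sum_unobsBinary_prod_xorSign_of_ssubset (hconn : G.SingleC G.obs) {S : Finset ν}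
    (hS : S ⊂ G.obs) {a : ν} (ha : a ∈ S) :
    ∑ w ∈ G.unobsBinary, ∏ x ∈ S, G.xorSign x w = 0 := by
  obtain ⟨u, hu, hone⟩ := exists_unobs_card_children_eq_one hconn hS ha
  rw [sum_unobsBinary_prod_xorSign]
  exact prod_eq_zero hu (by rw [hone]; norm_num)

namespace SEM

theorem fullAssign_filter_obs_zero (M : SEM G) (hdom : ∀ i ∈ G.verts, M.dom i = {0, 1}) :
    M.fullAssign.filter (fun w => ∀ x ∈ G.obs, w x = 0) = G.unobsBinary := by
  ext w
  simp only [mem_filter, fullAssign, unobsBinary, Fintype.mem_piFinset, verts, mem_union]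
  constructor
  · rintro ⟨hw, hobs⟩ x
    have hwx := hw x
    by_cases hxU : x ∈ G.unobs
    · simpa [hxU, hdom x (mem_union_right _ hxU)] using hwx
    · by_cases hxO : x ∈ G.obs
      · simp [hxU, hobs x hxO]
      · simpa [hxU, hxO] using hwx
  · intro hw
    have hw' : w ∈ G.unobsBinary := Fintype.mem_piFinset.mpr hw
    refine ⟨fun x => ?_, fun x hx => unobsBinary_apply_of_notMem hw' (notMem_unobs_of_mem_obs hx)⟩
    split_ifs with hx
    · rw [hdom x (mem_union.mpr hx)]
      exact unobsBinary_apply_mem hw' x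
    · simp [unobsBinary_apply_of_notMem hw' (fun h => hx (Or.inr h))]

theorem Q_obs_zero (M : SEM G) (hdom : ∀ i ∈ G.verts, M.dom i = {0, 1})
    (hU : ∀ u ∈ G.unobs, ∀ n ∈ ({0, 1} : Finset ℕ), M.pU u n = 1 / 2) :
    M.Q G.obs (fun _ => 0) =
      (1 / 2) ^ #G.unobs * ∑ w ∈ G.unobsBinary, ∏ x ∈ G.obs, M.pO x 0 w := by
  rw [Q, fullAssign_filter_obs_zero M hdom, mul_sum]
  refine sum_congr rfl fun w hw => ?_
  rw [prod_congr rfl fun u hu => hU u hu _ (unobsBinary_apply_mem hw u), prod_const, mul_comm]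
  congr 1
  exact prod_congr rfl fun x hx => by
    rw [unobsBinary_apply_of_notMem hw (notMem_unobs_of_mem_obs hx)]

end SEM

end CausalGraph

theorem Q_full_differ_at_zero_general
    {ν : Type} [Fintype ν] [DecidableEq ν] (G' : CausalGraph ν)
    (hconn : G'.SingleC G'.obs)
    (ε : ℝ) (hε1 : ε < 1)
    (V₁ : ν) (hV₁ : V₁ ∈ G'.obs)
    (M₁ M₂ : CausalGraph.SEM G')
    (hdom1 : ∀ i ∈ G'.verts, M₁.dom i = {0, 1})
    (hdom2 : ∀ i ∈ G'.verts, M₂.dom i = {0, 1})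
    (hU1 : ∀ u ∈ G'.unobs, ∀ n ∈ ({0, 1} : Finset ℕ), M₁.pU u n = 1/2)
    (hU2 : ∀ u ∈ G'.unobs, ∀ n ∈ ({0, 1} : Finset ℕ), M₂.pU u n = 1/2)
    (hO1 : ∀ x ∈ G'.obs, ∀ n ∈ ({0, 1} : Finset ℕ), ∀ pa : ν → ℕ,
      (∀ p, G'.E p x → pa p ∈ ({0, 1} : Finset ℕ)) →
      M₁.pO x n pa = (1 - ε) * (if n = G'.xorPa x pa then 1 else 0) + ε/2)
    (hO2 : ∀ x ∈ G'.obs, x ≠ V₁ → ∀ n ∈ ({0, 1} : Finset ℕ), ∀ pa : ν → ℕ,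
      (∀ p, G'.E p x → pa p ∈ ({0, 1} : Finset ℕ)) →
      M₂.pO x n pa = (1 - ε) * (if n = G'.xorPa x pa then 1 else 0) + ε/2)
    (hO2V : ∀ n ∈ ({0, 1} : Finset ℕ), ∀ pa : ν → ℕ,
      (∀ p, G'.E p V₁ → pa p ∈ ({0, 1} : Finset ℕ)) →
      M₂.pO V₁ n pa = (1 - ε) * (if n = 1 - G'.xorPa V₁ pa then 1 else 0) + ε/2) :
    M₁.Q G'.obs (fun _ => 0) ≠ M₂.Q G'.obs (fun _ => 0) := by
  open CausalGraph in
  set e := (1 - ε) / 2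
  have hbin : ∀ w ∈ G'.unobsBinary, ∀ x p, G'.E p x → w p ∈ ({0, 1} : Finset ℕ) :=
    fun w hw _ p _ => unobsBinary_apply_mem hw p
  have hxor : ∀ x w, G'.xorPa x w < 2 := fun _ _ => Nat.mod_lt _ two_pos
  have hp1 : ∀ w ∈ G'.unobsBinary, ∀ x ∈ G'.obs, M₁.pO x 0 w = e * G'.xorSign x w + 1 / 2 :=
    fun w hw x hx => by
      rw [hO1 x hx 0 (by simp) w (hbin w hw x), noisy_xor_zero_eq ε (hxor x w)]; rfl
  have hp2 : ∀ w ∈ G'.unobsBinary, ∀ x ∈ G'.obs.erase V₁,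
      M₂.pO x 0 w = e * G'.xorSign x w + 1 / 2 := fun w hw x hx => by
    rw [hO2 x (mem_of_mem_erase hx) (ne_of_mem_erase hx) 0 (by simp) w (hbin w hw x),
      noisy_xor_zero_eq ε (hxor x w)]; rfl
  have hp2V : ∀ w ∈ G'.unobsBinary, M₂.pO V₁ 0 w = -(e * G'.xorSign V₁ w) + 1 / 2 :=
    fun w hw => by
      rw [hO2V 0 (by simp) w (hbin w hw V₁), noisy_not_xor_zero_eq ε (hxor V₁ w)]; rfl
  have hdiff : ∀ w ∈ G'.unobsBinary, ∏ x ∈ G'.obs, M₁.pO x 0 w - ∏ x ∈ G'.obs, M₂.pO x 0 w =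
      2 * e * (G'.xorSign V₁ w * ∏ x ∈ G'.obs.erase V₁, (e * G'.xorSign x w + 1 / 2)) := by
    intro w hw
    rw [← mul_prod_erase _ _ hV₁, ← mul_prod_erase _ _ hV₁, hp1 w hw V₁ hV₁, hp2V w hw,
      prod_congr rfl fun x hx => hp1 w hw x (mem_of_mem_erase hx), prod_congr rfl (hp2 w hw)]
    ring
  have hsum := sum_mul_prod_erase_mul_add G'.unobsBinary hV₁ (fun w x => G'.xorSign x w)
    (1 / 2) e _ sum_unobsBinary_prod_xorSign_obs
    fun S hS ha => sum_unobsBinary_prod_xorSign_of_ssubset hconn hS ha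
  have he : e ≠ 0 := div_ne_zero (sub_ne_zero.mpr hε1.ne') two_ne_zero
  rw [Ne, ← sub_eq_zero, M₁.Q_obs_zero hdom1 hU1, M₂.Q_obs_zero hdom2 hU2, ← mul_sub,
    ← sum_sub_distrib, sum_congr rfl hdiff, ← mul_sum, hsum]
  positivity

/-- Appendix D, second lemma. In the two XOR-type models `M₁`, `M₂`
on a graph whose bidirected edges form a spanning tree of `V'` and which has no
directed edges between observed variables, the full `Q` functionals differ at the
all-zero realization: `Q^{M₁}[V'](0) ≠ Q^{M₂}[V'](0)`. -/
theorem Q_full_differ_at_zero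
    {ν : Type} [Fintype ν] [DecidableEq ν] (G' : CausalGraph ν)
    (hnoDir : ∀ a b : ν, a ∈ G'.obs → b ∈ G'.obs → ¬ G'.E a b)
    (hconn : G'.SingleC G'.obs) (htree : G'.unobs.card = G'.obs.card - 1)
    (ε : ℝ) (hε0 : 0 < ε) (hε1 : ε < 1)
    (V₁ : ν) (hV₁ : V₁ ∈ G'.obs)
    (M₁ M₂ : CausalGraph.SEM G')
    (hdom1 : ∀ i ∈ G'.verts, M₁.dom i = {0, 1})
    (hdom2 : ∀ i ∈ G'.verts, M₂.dom i = {0, 1})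
    (hU1 : ∀ u ∈ G'.unobs, ∀ n ∈ ({0, 1} : Finset ℕ), M₁.pU u n = 1/2)
    (hU2 : ∀ u ∈ G'.unobs, ∀ n ∈ ({0, 1} : Finset ℕ), M₂.pU u n = 1/2)
    (hO1 : ∀ x ∈ G'.obs, ∀ n ∈ ({0, 1} : Finset ℕ), ∀ pa : ν → ℕ,
      (∀ p, G'.E p x → pa p ∈ ({0, 1} : Finset ℕ)) →
      M₁.pO x n pa = (1 - ε) * (if n = G'.xorPa x pa then 1 else 0) + ε/2)
    (hO2 : ∀ x ∈ G'.obs, x ≠ V₁ → ∀ n ∈ ({0, 1} : Finset ℕ), ∀ pa : ν → ℕ,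
      (∀ p, G'.E p x → pa p ∈ ({0, 1} : Finset ℕ)) →
      M₂.pO x n pa = (1 - ε) * (if n = G'.xorPa x pa then 1 else 0) + ε/2)
    (hO2V : ∀ n ∈ ({0, 1} : Finset ℕ), ∀ pa : ν → ℕ,
      (∀ p, G'.E p V₁ → pa p ∈ ({0, 1} : Finset ℕ)) →
      M₂.pO V₁ n pa = (1 - ε) * (if n = 1 - G'.xorPa V₁ pa then 1 else 0) + ε/2) :
    M₁.Q G'.obs (fun _ => 0) ≠ M₂.Q G'.obs (fun _ => 0) :=
  Q_full_differ_at_zero_general G' hconn ε hε1 V₁ hV₁ M₁ M₂ hdom1 hdom2 hU1 hU2 hO1 hO2 hO2V
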